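/- The probability of event B4 is at most 2n²·exp(−L·(n−2)/12). -/

import Mathlib

open MeasureTheory

noncomputable section

/-- The uniform probability measure on `[0,1]`. -/
def unif : Measure ℝ := volume.restrict (Set.Icc (0:ℝ) 1)

/-- Joint law of the men's and women's public ratings: `2n` i.i.d. uniforms on `[0,1]`. -/
def ratingsMeasure (n : ℕ) : Measure ((Fin n → ℝ) × (Fin n → ℝ)) :=
  (Measure.pi fun _ => unif).prod (Measure.pi fun _ => unif)

/-- 0-indexed rank: the number of agents with strictly larger rating. -/
def rankOf {n : ℕ} (r : Fin n → ℝ) (a : Fin n) : ℕ :=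
  (Finset.univ.filter fun b => r a < r b).card

/-- Number of agents whose rating lies in the closed interval with endpoints `s` and `t`. -/
def countBetween {n : ℕ} (r : Fin n → ℝ) (s t : ℝ) : ℕ :=
  (Finset.univ.filter fun m => min s t ≤ r m ∧ r m ≤ max s t).card

/-- Event B4: for some pair of ranks `i ≠ j` (with `m = m_i`, `m' = m_j`, `w = w_i`,
`w' = w_j`, `x = r_m − r_{m'}`, `y = r_w − r_{w'}`), either `|x| ≤ 4L` and the number
of men with ratings between `r_m` and `r_{m'}` lies outside
`(2 + |x|(n−2) − L(n−2), 2 + |x|(n−2) + L(n−2))`, or `|y| ≤ 4L` and the analogous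
count for women lies outside `(2 + |y|(n−2) − L(n−2), 2 + |y|(n−2) + L(n−2))`. -/
def EventB4 (n : ℕ) (L : ℝ) (rM rW : Fin n → ℝ) : Prop :=
  ∃ a a' b b' : Fin n, a ≠ a' ∧
    rankOf rM a = rankOf rW b ∧ rankOf rM a' = rankOf rW b' ∧
    ((|rM a - rM a'| ≤ 4*L ∧
      ¬ (2 + |rM a - rM a'| * ((n:ℝ)-2) - L*((n:ℝ)-2) <
           (countBetween rM (rM a) (rM a') : ℝ) ∧
         (countBetween rM (rM a) (rM a') : ℝ) <
           2 + |rM a - rM a'| * ((n:ℝ)-2) + L*((n:ℝ)-2))) ∨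
     (|rW b - rW b'| ≤ 4*L ∧
      ¬ (2 + |rW b - rW b'| * ((n:ℝ)-2) - L*((n:ℝ)-2) <
           (countBetween rW (rW b) (rW b') : ℝ) ∧
         (countBetween rW (rW b) (rW b') : ℝ) <
           2 + |rW b - rW b'| * ((n:ℝ)-2) + L*((n:ℝ)-2))))

/-!
Fix two agents `a ≠ a'` of one side. Given their ratings `u, v`, each of the other `n - 2`
ratings falls between them independently with probability `|u - v|`, so the count of the event
is `2 + Bin(n - 2, |u - v|)`. A Chernoff bound with tilt `t = ±1/4`, using
`exp t ≤ 1 + t + 5/144`, bounds each tail by `exp (-L (n - 2) / 12)` whenever `|u - v| ≤ 4L`.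
A union bound over the `n (n - 1) / 2` unordered pairs and both tails gives `n² exp (…)` per
side. On the women's side the pair `w_i, w_j` is automatically distinct, since `i ≠ j` and
the men's ratings are almost surely distinct.
-/

open Finset Set
open scoped ENNReal

instance : IsProbabilityMeasure unif := ⟨by simp [unif, Real.volume_Icc]⟩

instance : NullSingletonClass unif := by unfold unif; infer_instance

abbrev unifPi (n : ℕ) : Measure (Fin n → ℝ) := Measure.pi fun _ => unif

lemma ae_unifPi_mem_Icc {n : ℕ} (i : Fin n) : ∀ᵐ r ∂unifPi n, r i ∈ Icc (0:ℝ) 1 :=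
  Measure.tendsto_eval_ae_ae.eventually (ae_restrict_mem measurableSet_Icc)

lemma unif_Icc_min_max {u v : ℝ} (hu : u ∈ Icc (0:ℝ) 1) (hv : v ∈ Icc (0:ℝ) 1) :
    unif (Icc (min u v) (max u v)) = ENNReal.ofReal |u - v| := by
  rw [unif, Measure.restrict_apply measurableSet_Icc,
    inter_eq_left.2 (Icc_subset_Icc (le_min hu.1 hv.1) (max_le hu.2 hv.2)), Real.volume_Icc,
    max_sub_min_eq_abs, abs_sub_comm]

lemma exp_sub_one_sub_le_of_abs_le_quarter {t : ℝ} (ht : |t| ≤ 1/4) :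
    Real.exp t - 1 - t ≤ 5/144 := by
  have h := (abs_le.1 (Real.exp_bound (x := t) (by linarith) (n := 3) (by norm_num))).2
  norm_num [Finset.sum_range_succ, Nat.factorial] at h
  have h2 : t ^ 2 ≤ 1/16 := by nlinarith [sq_abs t, abs_nonneg t]
  have h3 : |t| ^ 3 ≤ (1/4) ^ 3 := pow_le_pow_left₀ (abs_nonneg t) ht 3
  nlinarith

def tilt (t u v w : ℝ) : ℝ≥0∞ :=
  if w ∈ Icc (min u v) (max u v) then ENNReal.ofReal (Real.exp t) else 1

lemma measurable_tilt (t u v : ℝ) : Measurable (tilt t u v) :=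
  Measurable.ite measurableSet_Icc measurable_const measurable_const

lemma lintegral_tilt_le {t c u v : ℝ} (hc : Real.exp t - 1 ≤ c) (hu : u ∈ Icc (0:ℝ) 1)
    (hv : v ∈ Icc (0:ℝ) 1) :
    ∫⁻ w, tilt t u v w ∂unif ≤ ENNReal.ofReal (Real.exp (c * |u - v|)) := by
  set I := Icc (min u v) (max u v)
  have hℓ : |u - v| ≤ 1 := abs_sub_le_iff.2 ⟨by linarith [hu.2, hv.1], by linarith [hu.1, hv.2]⟩
  calc ∫⁻ w, tilt t u v w ∂unif = ENNReal.ofReal (Real.exp t) * unif I + unif Iᶜ := by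
        rw [← lintegral_add_compl _ (measurableSet_Icc : MeasurableSet I),
          setLIntegral_congr_fun (f := tilt t u v) (g := fun _ => ENNReal.ofReal (Real.exp t))
            measurableSet_Icc fun w hw => if_pos hw,
          setLIntegral_congr_fun (f := tilt t u v) (g := fun _ => 1)
            measurableSet_Icc.compl fun w hw => if_neg hw,
          setLIntegral_const, setLIntegral_const, one_mul]
    _ = ENNReal.ofReal (1 + (Real.exp t - 1) * |u - v|) := by
        rw [prob_compl_eq_one_sub measurableSet_Icc, unif_Icc_min_max hu hv,
          ← ENNReal.ofReal_one, ← ENNReal.ofReal_sub _ (abs_nonneg _),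
          ← ENNReal.ofReal_mul (Real.exp_nonneg t),
          ← ENNReal.ofReal_add (by positivity) (by linarith)]
        ring_nf
    _ ≤ ENNReal.ofReal (Real.exp (c * |u - v|)) := by
        gcongr
        nlinarith [Real.add_one_le_exp (c * |u - v|), abs_nonneg (u - v)]

lemma prod_tilt {ι : Type*} (s : Finset ι) (t u v : ℝ) (r : ι → ℝ) :
    ∏ i ∈ s, tilt t u v (r i)
      = ENNReal.ofReal (Real.exp (t * #{i ∈ s | r i ∈ Icc (min u v) (max u v)})) := by
  simp only [tilt]
  rw [Finset.prod_ite, prod_const, prod_const_one, mul_one,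
    ← ENNReal.ofReal_pow (Real.exp_nonneg t), ← Real.exp_nat_mul, mul_comm]

lemma lintegral_pi_prod_eq_pow {α ι : Type*} [MeasurableSpace α] [Fintype ι] (μ : Measure α)
    [IsProbabilityMeasure μ] {f : α → ℝ≥0∞} (hf : Measurable f) :
    ∫⁻ y, ∏ i, f (y i) ∂Measure.pi (fun _ : ι => μ) = (∫⁻ x, f x ∂μ) ^ Fintype.card ι := by
  rw [ProbabilityTheory.lintegral_prod_eq_prod_lintegral_of_indepFun _ _
      (ProbabilityTheory.iIndepFun_pi fun _ => hf.aemeasurable)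
      fun i => hf.comp (measurable_pi_apply i)]
  simp_rw [(measurePreserving_eval (fun _ : ι => μ) _).lintegral_comp hf]
  rw [prod_const, card_univ]

lemma lmarginal_mul_prod_eq_pow {ι α : Type*} [DecidableEq ι] [MeasurableSpace α]
    (μ : Measure α) [IsProbabilityMeasure μ] {s : Finset ι} {a a' : ι} (ha : a ∉ s)
    (ha' : a' ∉ s) (g : α → α → ℝ≥0∞) {f : α → α → α → ℝ≥0∞} (hf : ∀ u v, Measurable (f u v))
    (x : ι → α) :
    (∫⋯∫⁻_s, (fun r => g (r a) (r a') * ∏ i ∈ s, f (r a) (r a') (r i)) ∂fun _ => μ) x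
      = g (x a) (x a') * (∫⁻ w, f (x a) (x a') w ∂μ) ^ #s := by
  simp only [lmarginal, Function.updateFinset, dif_neg ha, dif_neg ha']
  simp_rw [← prod_attach s, dif_pos (Subtype.prop _), Subtype.coe_eta, ← univ_eq_attach]
  rw [lintegral_const_mul _ (by fun_prop), lintegral_pi_prod_eq_pow μ (hf _ _), Fintype.card_coe]

def othersBetween {n : ℕ} (a a' : Fin n) (r : Fin n → ℝ) : ℕ :=
  #{i ∈ ({a, a'} : Finset (Fin n))ᶜ | r i ∈ Icc (min (r a) (r a')) (max (r a) (r a'))}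

/-- For `t > 0` this is an upper tail `(|r a - r a'| + e) (n - 2) ≤ othersBetween a a' r`,
for `t < 0` the corresponding lower tail. -/
def tailEvent (n : ℕ) (M t e : ℝ) (a a' : Fin n) : Set (Fin n → ℝ) :=
  {r | |r a - r a'| ≤ M ∧
    t * ((|r a - r a'| + e) * ((n:ℝ) - 2)) ≤ t * othersBetween a a' r}

lemma card_compl_pair {n : ℕ} {a a' : Fin n} (h : a ≠ a') :
    (#({a, a'} : Finset (Fin n))ᶜ : ℝ) = (n:ℝ) - 2 := by
  have h2 : #({a, a'} : Finset (Fin n)) = 2 := card_pair h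
  have hn : 2 ≤ n := by simpa [h2] using card_le_univ ({a, a'} : Finset (Fin n))
  rw [card_compl, h2, Fintype.card_fin, Nat.cast_sub hn, Nat.cast_ofNat]

lemma tilted_weight_le {t c e M δ m u v : ℝ} {k : ℕ} (hk : (k:ℝ) = m) (hm : 0 ≤ m)
    (hc : Real.exp t - 1 ≤ c) (hδ : ∀ ℓ, 0 ≤ ℓ → ℓ ≤ M → c * ℓ - t * (ℓ + e) ≤ -δ)
    (hu : u ∈ Icc (0:ℝ) 1) (hv : v ∈ Icc (0:ℝ) 1) (hM : |u - v| ≤ M) :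
    ENNReal.ofReal (Real.exp (-(t * ((|u - v| + e) * m)))) * (∫⁻ w, tilt t u v w ∂unif) ^ k
      ≤ ENNReal.ofReal (Real.exp (-δ * m)) := by
  calc _ ≤ ENNReal.ofReal (Real.exp (-(t * ((|u - v| + e) * m))))
          * ENNReal.ofReal (Real.exp (c * |u - v|)) ^ k := by
        gcongr; exact lintegral_tilt_le hc hu hv
    _ = ENNReal.ofReal (Real.exp ((c * |u - v| - t * (|u - v| + e)) * m)) := by
        rw [← ENNReal.ofReal_pow (Real.exp_nonneg _), ← Real.exp_nat_mul,
          ← ENNReal.ofReal_mul (Real.exp_nonneg _), ← Real.exp_add, hk]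
        ring_nf
    _ ≤ ENNReal.ofReal (Real.exp (-δ * m)) := by
        gcongr
        exact hδ _ (abs_nonneg _) hM

theorem unifPi_tailEvent_le {n : ℕ} {a a' : Fin n} (h : a ≠ a') {t c e M δ : ℝ}
    (hc : Real.exp t - 1 ≤ c) (hδ : ∀ ℓ, 0 ≤ ℓ → ℓ ≤ M → c * ℓ - t * (ℓ + e) ≤ -δ) :
    unifPi n (tailEvent n M t e a a') ≤ ENNReal.ofReal (Real.exp (-δ * ((n:ℝ) - 2))) := by
  set O : Finset (Fin n) := ({a, a'} : Finset (Fin n))ᶜ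
  set C := ENNReal.ofReal (Real.exp (-δ * ((n:ℝ) - 2)))
  -- Chernoff: `F ≥ 1` a.e. on the event, and integrating out the coordinates in `O` first
  -- leaves at most `C` whatever the ratings of `a` and `a'`.
  let G : ℝ → ℝ → ℝ≥0∞ := fun u v =>
    if u ∈ Icc (0:ℝ) 1 ∧ v ∈ Icc (0:ℝ) 1 ∧ |u - v| ≤ M then
      ENNReal.ofReal (Real.exp (-(t * ((|u - v| + e) * ((n:ℝ) - 2))))) else 0
  let F : (Fin n → ℝ) → ℝ≥0∞ := fun r => G (r a) (r a') * ∏ i ∈ O, tilt t (r a) (r a') (r i)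
  have hF : Measurable F := by
    have hbox : MeasurableSet {r : Fin n → ℝ |
        r a ∈ Icc (0:ℝ) 1 ∧ r a' ∈ Icc (0:ℝ) 1 ∧ |r a - r a'| ≤ M} := by
      simp only [ofPred_and]
      exact (measurableSet_Icc.preimage (measurable_pi_apply a)).inter
        ((measurableSet_Icc.preimage (measurable_pi_apply a')).inter
          (measurableSet_le (by fun_prop) measurable_const))
    have hbetween : ∀ i, MeasurableSet {r : Fin n → ℝ |
        r i ∈ Icc (min (r a) (r a')) (max (r a) (r a'))} := fun i => by
      simp only [Set.mem_Icc, ofPred_and]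
      exact (measurableSet_le (by fun_prop) (by fun_prop)).inter
        (measurableSet_le (by fun_prop) (by fun_prop))
    exact (Measurable.ite hbox (by fun_prop) measurable_const).mul
      (Finset.measurable_prod _ fun i _ => Measurable.ite (hbetween i) measurable_const
        measurable_const)
  have hmarkov : tailEvent n M t e a a' ≤ᵐ[unifPi n] {r | 1 ≤ F r} := by
    filter_upwards [ae_unifPi_mem_Icc a, ae_unifPi_mem_Icc a'] with r ha ha' ⟨hM, hK⟩
    show 1 ≤ G (r a) (r a') * _
    rw [show G (r a) (r a') = _ from if_pos ⟨ha, ha', hM⟩, prod_tilt,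
      ← ENNReal.ofReal_mul (Real.exp_nonneg _), ← Real.exp_add, ENNReal.one_le_ofReal,
      Real.one_le_exp_iff]
    unfold othersBetween at hK
    linarith
  have hinner : ∀ x, (∫⋯∫⁻_O, F ∂fun _ => unif) x ≤ C := by
    intro x
    rw [lmarginal_mul_prod_eq_pow unif (by simp [O]) (by simp [O]) G (measurable_tilt t) x]
    by_cases hx : x a ∈ Icc (0:ℝ) 1 ∧ x a' ∈ Icc (0:ℝ) 1 ∧ |x a - x a'| ≤ M
    · have hm : (0:ℝ) ≤ (n:ℝ) - 2 := by rw [← card_compl_pair h]; positivity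
      rw [show G (x a) (x a') = _ from if_pos hx]
      exact tilted_weight_le (card_compl_pair h) hm hc hδ hx.1 hx.2.1 hx.2.2
    · rw [show G (x a) (x a') = 0 from if_neg hx, zero_mul]
      exact zero_le
  calc unifPi n (tailEvent n M t e a a') ≤ unifPi n {r | 1 ≤ F r} := measure_mono_ae hmarkov
    _ ≤ ∫⁻ r, F r ∂unifPi n := by simpa using mul_meas_ge_le_lintegral₀ hF.aemeasurable 1
    _ = (∫⋯∫⁻_({a, a'} ∪ O), F ∂fun _ => unif) 0 := by
        rw [union_compl, lintegral_eq_lmarginal_univ]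
    _ = (∫⋯∫⁻_{a, a'}, (∫⋯∫⁻_O, F ∂fun _ => unif) ∂fun _ => unif) 0 := by
        rw [lmarginal_union _ _ hF disjoint_compl_right]
    _ ≤ (∫⋯∫⁻_{a, a'}, (fun _ => C) ∂fun _ => unif) 0 := lmarginal_mono hinner _
    _ = C := by simp [lmarginal]

lemma countBetween_eq_othersBetween_add_two {n : ℕ} (r : Fin n → ℝ) {a a' : Fin n}
    (h : a ≠ a') : countBetween r (r a) (r a') = othersBetween a a' r + 2 := by
  have hpair : ∀ i ∈ ({a, a'} : Finset (Fin n)),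
      r i ∈ Icc (min (r a) (r a')) (max (r a) (r a')) := by
    simp only [Finset.mem_insert, Finset.mem_singleton, forall_eq_or_imp, forall_eq]
    exact ⟨⟨min_le_left _ _, le_max_left _ _⟩, ⟨min_le_right _ _, le_max_right _ _⟩⟩
  rw [show countBetween r (r a) (r a') = #{i | r i ∈ Icc (min (r a) (r a')) (max (r a) (r a'))}
      from rfl, ← union_compl {a, a'}, filter_union,
    card_union_of_disjoint (disjoint_filter_filter disjoint_compl_right), filter_true_of_mem hpair,
    card_pair h, add_comm]
  rfl

/-- Verbatim one disjunct of `EventB4`, so that the two unfold to each other. -/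
def IsBadPair {n : ℕ} (L : ℝ) (r : Fin n → ℝ) (a a' : Fin n) : Prop :=
  |r a - r a'| ≤ 4*L ∧
    ¬ (2 + |r a - r a'| * ((n:ℝ)-2) - L*((n:ℝ)-2) < (countBetween r (r a) (r a') : ℝ) ∧
      (countBetween r (r a) (r a') : ℝ) < 2 + |r a - r a'| * ((n:ℝ)-2) + L*((n:ℝ)-2))

lemma isBadPair_comm {n : ℕ} {L : ℝ} {r : Fin n → ℝ} {a a' : Fin n} :
    IsBadPair L r a a' ↔ IsBadPair L r a' a := by
  simp only [IsBadPair, abs_sub_comm (r a), countBetween, min_comm (r a), max_comm (r a)]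

lemma isBadPair_mem_tailEvent {n : ℕ} {L : ℝ} {r : Fin n → ℝ} {a a' : Fin n} (h : a ≠ a')
    (hbad : IsBadPair L r a a') :
    r ∈ tailEvent n (4*L) (1/4) L a a' ∪ tailEvent n (4*L) (-1/4) (-L) a a' := by
  obtain ⟨hM, hout⟩ := hbad
  rw [countBetween_eq_othersBetween_add_two r h, not_and_or, not_lt, not_lt] at hout
  push_cast at hout
  rcases hout with hlow | hhigh
  · exact Or.inr ⟨hM, by linarith⟩
  · exact Or.inl ⟨hM, by linarith⟩

theorem unifPi_exists_isBadPair_le (n : ℕ) (L : ℝ) :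
    unifPi n {r | ∃ a a', a ≠ a' ∧ IsBadPair L r a a'}
      ≤ ENNReal.ofReal ((n:ℝ)^2 * Real.exp (-L * ((n:ℝ) - 2) / 12)) := by
  set C := ENNReal.ofReal (Real.exp (-(L/12) * ((n:ℝ) - 2)))
  set P : Finset (Fin n × Fin n) := {p | p.1 < p.2}
  have hc : ∀ t : ℝ, |t| ≤ 1/4 → Real.exp t - 1 ≤ t + 5/144 := fun t ht => by
    linarith [exp_sub_one_sub_le_of_abs_le_quarter ht]
  -- With `c = t + 5/144` and `t e = L/4`, `c ℓ - t (ℓ + e) = 5ℓ/144 - L/4 ≤ -L/9` for `ℓ ≤ 4L`.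
  have htail : ∀ p : Fin n × Fin n, p.1 ≠ p.2 →
      unifPi n (tailEvent n (4*L) (1/4) L p.1 p.2 ∪ tailEvent n (4*L) (-1/4) (-L) p.1 p.2)
        ≤ 2 * C := fun p h => by
    refine (measure_union_le _ _).trans ?_
    rw [two_mul]
    gcongr
    · exact unifPi_tailEvent_le h (hc _ (by norm_num [abs_of_pos])) fun ℓ _ _ => by linarith
    · exact unifPi_tailEvent_le h (hc _ (by norm_num [abs_of_neg])) fun ℓ _ _ => by linarith
  have hcover : {r | ∃ a a', a ≠ a' ∧ IsBadPair L r a a'} ⊆ ⋃ p ∈ P,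
      (tailEvent n (4*L) (1/4) L p.1 p.2 ∪ tailEvent n (4*L) (-1/4) (-L) p.1 p.2) := by
    rintro r ⟨a, a', h, hbad⟩
    rcases h.lt_or_gt with hlt | hlt
    · exact mem_biUnion (x := (a, a')) (by simpa [P] using hlt) (isBadPair_mem_tailEvent h hbad)
    · exact mem_biUnion (x := (a', a)) (by simpa [P] using hlt)
        (isBadPair_mem_tailEvent h.symm (isBadPair_comm.1 hbad))
  have hcard : 2 * #P ≤ n^2 := by
    rw [Fintype.card_product_filter_lt, Fintype.card_fin, Nat.choose_two_right, sq]
    exact (Nat.mul_div_le _ 2).trans (Nat.mul_le_mul_left _ (Nat.sub_le n 1))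
  calc _ ≤ ∑ p ∈ P, unifPi n
        (tailEvent n (4*L) (1/4) L p.1 p.2 ∪ tailEvent n (4*L) (-1/4) (-L) p.1 p.2) :=
        (measure_mono hcover).trans (measure_biUnion_finset_le _ _)
    _ ≤ ∑ _p ∈ P, 2 * C := sum_le_sum fun p hp => htail p (by simp [P] at hp; exact hp.ne)
    _ = ((2 * #P : ℕ) : ℝ≥0∞) * C := by rw [sum_const, nsmul_eq_mul]; push_cast; ring
    _ ≤ ((n^2 : ℕ) : ℝ≥0∞) * C := by gcongr
    _ = _ := by
        rw [← ENNReal.ofReal_natCast, ← ENNReal.ofReal_mul (by positivity)]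
        push_cast
        ring_nf

lemma rankOf_lt_rankOf {n : ℕ} (r : Fin n → ℝ) {a b : Fin n} (h : r a < r b) :
    rankOf r b < rankOf r a := by
  refine card_lt_card ⟨monotone_filter_right _ fun x _ (hx : r b < r x) => h.trans hx, ?_⟩
  intro hsub
  simpa using hsub (mem_filter.2 ⟨mem_univ b, h⟩)

lemma eq_of_rankOf_eq {n : ℕ} (r : Fin n → ℝ) {a b : Fin n} (h : rankOf r a = rankOf r b) :
    r a = r b := by
  by_contra hne
  rcases lt_or_gt_of_ne hne with hlt | hlt
  · exact (rankOf_lt_rankOf r hlt).ne' h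
  · exact (rankOf_lt_rankOf r hlt).ne h

lemma unifPi_coord_eq_null {n : ℕ} {i j : Fin n} (hij : i ≠ j) :
    unifPi n {r | r i = r j} = 0 := by
  have hS : MeasurableSet {r : Fin n → ℝ | r i = r j} :=
    measurableSet_eq_fun (measurable_pi_apply i) (measurable_pi_apply j)
  have hslice : ∀ x : Fin n → ℝ,
      ∫⁻ w, {r | r i = r j}.indicator 1 (Function.update x i w) ∂unif = 0 := fun x => by
    have hpt : ∀ w, {r | r i = r j}.indicator (1 : (Fin n → ℝ) → ℝ≥0∞) (Function.update x i w)
        = ({x j} : Set ℝ).indicator 1 w := fun w => by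
      simp [indicator, Function.update_of_ne hij.symm]
    simp_rw [hpt]
    rw [lintegral_indicator_one (measurableSet_singleton _), measure_singleton]
  rw [← lintegral_indicator_one hS, lintegral_eq_lmarginal_univ 0,
    lmarginal_erase' _ (measurable_one.indicator hS) (mem_univ i)]
  simp [hslice, lmarginal]

lemma unifPi_not_injective (n : ℕ) : unifPi n {r | ¬ Function.Injective r} = 0 := by
  have hunion : {r : Fin n → ℝ | ¬ Function.Injective r}
      = ⋃ i, ⋃ j, ⋃ (_ : i ≠ j), {r | r i = r j} := by
    ext r
    simp [Function.Injective]
    tauto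
  rw [hunion]
  exact measure_iUnion_null fun i => measure_iUnion_null fun j => measure_iUnion_null
    unifPi_coord_eq_null

lemma ratingsMeasure_fst_preimage (n : ℕ) (S : Set (Fin n → ℝ)) :
    ratingsMeasure n (Prod.fst ⁻¹' S) = unifPi n S := by
  rw [ratingsMeasure, ← prod_univ, Measure.prod_prod, measure_univ, mul_one]

lemma ratingsMeasure_snd_preimage (n : ℕ) (S : Set (Fin n → ℝ)) :
    ratingsMeasure n (Prod.snd ⁻¹' S) = unifPi n S := by
  rw [ratingsMeasure, ← univ_prod, Measure.prod_prod, measure_univ, one_mul]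

theorem stmt11_general (n : ℕ) (L : ℝ) :
    ratingsMeasure n {ω | EventB4 n L ω.1 ω.2} ≤
      ENNReal.ofReal (2 * (n:ℝ)^2 * Real.exp (-L * ((n:ℝ) - 2) / 12)) := by
  set Bad := {r : Fin n → ℝ | ∃ a a', a ≠ a' ∧ IsBadPair L r a a'}
  set NonInj := {r : Fin n → ℝ | ¬ Function.Injective r}
  have hcover : {ω | EventB4 n L ω.1 ω.2} ⊆
      Prod.fst ⁻¹' Bad ∪ Prod.snd ⁻¹' Bad ∪ Prod.fst ⁻¹' NonInj := by
    rintro ⟨rM, rW⟩ ⟨a, a', b, b', h, hb, hb', hbad | hbad⟩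
    · exact Or.inl (Or.inl ⟨a, a', h, hbad⟩)
    · by_cases hinj : Function.Injective rM
      · refine Or.inl (Or.inr ⟨b, b', fun hbb => h (hinj (eq_of_rankOf_eq rM ?_)), hbad⟩)
        rw [hb, hb', hbb]
      · exact Or.inr hinj
  calc _ ≤ ratingsMeasure n (Prod.fst ⁻¹' Bad) + ratingsMeasure n (Prod.snd ⁻¹' Bad)
        + ratingsMeasure n (Prod.fst ⁻¹' NonInj) :=
        (measure_mono hcover).trans
          ((measure_union_le _ _).trans (add_le_add_left (measure_union_le _ _) _))
    _ = unifPi n Bad + unifPi n Bad := by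
        rw [ratingsMeasure_fst_preimage, ratingsMeasure_snd_preimage, ratingsMeasure_fst_preimage,
          unifPi_not_injective, add_zero]
    _ ≤ _ := by
        grw [unifPi_exists_isBadPair_le, ← ENNReal.ofReal_add (by positivity) (by positivity)]
        exact le_of_eq (by ring_nf)

/-- `Pr[B4] ≤ 2n²·exp(−L(n−2)/12)`. -/
theorem stmt11 (n : ℕ) (L : ℝ) (hL : 0 < L) :
    ratingsMeasure n {ω | EventB4 n L ω.1 ω.2} ≤
      ENNReal.ofReal (2 * (n:ℝ)^2 * Real.exp (-L * ((n:ℝ) - 2) / 12)) :=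
  stmt11_general n L

end
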